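/- Let D be an n×n diagonal matrix with positive diagonal entries and A an arbitrary n×n complex matrix. Then ‖A‖² ≤ ‖DA‖·‖D⁻¹A‖ and ‖A‖² ≤ ‖AD‖·‖AD⁻¹‖, where ‖·‖ is the spectral norm. -/
import Mathlib


open scoped Matrix

set_option maxHeartbeats 1000000
set_option synthInstance.maxHeartbeats 400000

/-- The spectral (operator) norm of an `n × n` complex matrix acting on `ℂⁿ` with
the Euclidean norm. -/
noncomputable def matOpNorm {n : ℕ} (M : Matrix (Fin n) (Fin n) ℂ) : ℝ :=
  ‖Matrix.toEuclideanCLM (𝕜 := ℂ) M‖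

open scoped Matrix.Norms.L2Operator in
lemma matOpNorm_eq_l2 {n : ℕ} (M : Matrix (Fin n) (Fin n) ℂ) : matOpNorm M = ‖M‖ :=
  (Matrix.cstar_norm_def M).symm

open scoped Matrix.Norms.L2Operator in
lemma matOpNorm_mul_le {n : ℕ} (M N : Matrix (Fin n) (Fin n) ℂ) :
    matOpNorm (M * N) ≤ matOpNorm M * matOpNorm N := by
  simp only [matOpNorm_eq_l2]
  exact Matrix.l2_opNorm_mul M N

open scoped Matrix.Norms.L2Operator in
lemma matOpNorm_conjTranspose {n : ℕ} (M : Matrix (Fin n) (Fin n) ℂ) :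
    matOpNorm Mᴴ = matOpNorm M := by
  simp only [matOpNorm_eq_l2]
  exact Matrix.l2_opNorm_conjTranspose M

open scoped Matrix.Norms.L2Operator in
lemma matOpNorm_sq_eq {n : ℕ} (M : Matrix (Fin n) (Fin n) ℂ) :
    matOpNorm M ^ 2 = matOpNorm (Mᴴ * M) := by
  simp only [matOpNorm_eq_l2, sq]
  exact (Matrix.l2_opNorm_conjTranspose_mul_self M).symm

/-- Matrix case (`m = 2`) of the operator norm analogue of Cohen's inequality:
for a diagonal `D` with positive diagonal entries and any complex matrix `A`,
`‖A‖² ≤ ‖DA‖·‖D⁻¹A‖` and `‖A‖² ≤ ‖AD‖·‖AD⁻¹‖`. -/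
theorem matOpNorm_sq_le (n : ℕ) (c : Fin n → ℝ) (hc : ∀ j, 0 < c j)
    (A : Matrix (Fin n) (Fin n) ℂ) :
    matOpNorm A ^ 2 ≤
        matOpNorm (Matrix.diagonal (fun j => (c j : ℂ)) * A) *
        matOpNorm ((Matrix.diagonal (fun j => (c j : ℂ)))⁻¹ * A) ∧
    matOpNorm A ^ 2 ≤
        matOpNorm (A * Matrix.diagonal (fun j => (c j : ℂ))) *
        matOpNorm (A * (Matrix.diagonal (fun j => (c j : ℂ)))⁻¹) := by
  set D : Matrix (Fin n) (Fin n) ℂ := Matrix.diagonal (fun j => (c j : ℂ)) with hDdef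
  have hdet : IsUnit D.det := by
    rw [hDdef, Matrix.det_diagonal]
    refine (Finset.prod_ne_zero_iff.2 fun j _ => ?_).isUnit
    exact_mod_cast (hc j).ne'
  have hDH : Dᴴ = D := by
    rw [hDdef, Matrix.diagonal_conjTranspose]
    funext j
    simp [Pi.star_def, Complex.star_def, Complex.conj_ofReal]
  have hDinvH : (D⁻¹)ᴴ = D⁻¹ := by
    rw [Matrix.conjTranspose_nonsing_inv, hDH]
  have h1 : D * D⁻¹ = 1 := Matrix.mul_nonsing_inv D hdet
  constructor
  · have key : Aᴴ * A = (D * A)ᴴ * (D⁻¹ * A) := by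
      rw [Matrix.conjTranspose_mul, hDH, Matrix.mul_assoc, ← Matrix.mul_assoc D D⁻¹ A, h1,
        Matrix.one_mul]
    calc matOpNorm A ^ 2 = matOpNorm ((D * A)ᴴ * (D⁻¹ * A)) := by rw [matOpNorm_sq_eq, key]
      _ ≤ matOpNorm ((D * A)ᴴ) * matOpNorm (D⁻¹ * A) := matOpNorm_mul_le _ _
      _ = matOpNorm (D * A) * matOpNorm (D⁻¹ * A) := by rw [matOpNorm_conjTranspose]
  · have key : A * Aᴴ = (A * D) * (A * D⁻¹)ᴴ := by
      rw [Matrix.conjTranspose_mul, hDinvH, Matrix.mul_assoc, ← Matrix.mul_assoc D D⁻¹ Aᴴ, h1,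
        Matrix.one_mul]
    have h2 : matOpNorm A ^ 2 = matOpNorm (A * Aᴴ) := by
      rw [← matOpNorm_conjTranspose A, matOpNorm_sq_eq, Matrix.conjTranspose_conjTranspose]
    calc matOpNorm A ^ 2 = matOpNorm ((A * D) * (A * D⁻¹)ᴴ) := by rw [h2, key]
      _ ≤ matOpNorm (A * D) * matOpNorm ((A * D⁻¹)ᴴ) := matOpNorm_mul_le _ _
      _ = matOpNorm (A * D) * matOpNorm (A * D⁻¹) := by rw [matOpNorm_conjTranspose]
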